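/- arXiv:2405.12624 — 3 statements merged into one kernel-verified Lean document; each statement's English description precedes it below -/
import Mathlib

section
/- Let f : [-1,1] → ℝ be continuously differentiable infinitely often, let k ∈ ℕ with k ≥ 1, and define the Chebyshev coefficient a_n(f) = (2/π) ∫_{-1}^{1} T_n(x) f(x) / √(1-x²) dx, where T_n is the n-th Chebyshev polynomial of the first kind. Then for all n ≥ k+1, |a_n(f)| ≤ ‖f^{(k+1)}‖_{L^∞([-1,1])} / (n(n-1)⋯(n-k)), and in particular |a_n(f)| ≤ ‖f^{(k+1)}‖_{L^∞([-1,1])}. -/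
open MeasureTheory intervalIntegral Real Set

lemma aux_cov (g : ℝ → ℝ) (n : ℕ) :
    (∫ x in (-1:ℝ)..1, Real.cos (n * Real.arccos x) * g x / Real.sqrt (1 - x ^ 2))
      = ∫ θ in (0:ℝ)..π, Real.cos (n * θ) * g (Real.cos θ) := by
  have h1 : (∫ x in (-1:ℝ)..1, Real.cos (n * Real.arccos x) * g x / Real.sqrt (1 - x ^ 2))
      = ∫ x in Icc (-1:ℝ) 1, Real.cos (n * Real.arccos x) * g x / Real.sqrt (1 - x ^ 2) := by
    rw [intervalIntegral.integral_of_le (by norm_num), ← integral_Icc_eq_integral_Ioc]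
  have h2 : (∫ θ in (0:ℝ)..π, Real.cos (n * θ) * g (Real.cos θ))
      = ∫ θ in Ioo (0:ℝ) π, Real.cos (n * θ) * g (Real.cos θ) := by
    rw [intervalIntegral.integral_of_le Real.pi_pos.le, integral_Ioc_eq_integral_Ioo]
  rw [h1, h2]
  have himg : Real.cos '' Icc 0 π = Icc (-1:ℝ) 1 := Real.bijOn_cos.image_eq
  rw [← himg, integral_image_eq_integral_abs_deriv_smul measurableSet_Icc
      (fun θ _ => (Real.hasDerivAt_cos θ).hasDerivWithinAt) Real.injOn_cos]
  rw [integral_Icc_eq_integral_Ioc, integral_Ioc_eq_integral_Ioo]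
  apply setIntegral_congr_fun measurableSet_Ioo
  intro θ hθ
  have hs : 0 < Real.sin θ := Real.sin_pos_of_pos_of_lt_pi hθ.1 hθ.2
  have hsq : Real.sqrt (1 - Real.cos θ ^ 2) = Real.sin θ := by
    rw [show (1 : ℝ) - Real.cos θ ^ 2 = Real.sin θ ^ 2 by rw [Real.sin_sq]]
    exact Real.sqrt_sq hs.le
  simp only [smul_eq_mul, abs_neg, abs_of_pos hs, hsq,
    Real.arccos_cos hθ.1.le (hθ.2.le.trans (le_refl π))]
  field_simp

lemma aux_sinmul (m : ℕ) (θ : ℝ) :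
    HasDerivAt (fun t => Real.sin ((m+1) * t) / (m+1)) (Real.cos ((m+1) * θ)) θ := by
  have h1 : HasDerivAt (fun t : ℝ => ((m:ℝ)+1) * t) ((m:ℝ)+1) θ := by
    simpa using (hasDerivAt_id θ).const_mul ((m:ℝ)+1)
  have h2 := (Real.hasDerivAt_sin (((m:ℝ)+1) * θ)).comp θ h1
  have h3 := h2.div_const ((m:ℝ)+1)
  have hm : ((m:ℝ)+1) ≠ 0 := by positivity
  simpa [mul_div_assoc, mul_div_cancel_left₀, hm, mul_comm, mul_div_cancel_right₀] using h3

lemma aux_ibp (g g' : ℝ → ℝ) (hg : ∀ x, HasDerivAt g (g' x) x) (hg' : Continuous g')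
    (m : ℕ) :
    (∫ θ in (0:ℝ)..π, Real.cos ((m+1) * θ) * g (Real.cos θ))
      = (1/((m:ℝ)+1)) * ∫ θ in (0:ℝ)..π, Real.sin θ * g' (Real.cos θ) * Real.sin ((m+1) * θ) := by
  have hu : ∀ θ ∈ uIcc (0:ℝ) π, HasDerivAt (fun t => g (Real.cos t))
      (-Real.sin θ * g' (Real.cos θ)) θ := by
    intro θ _
    have := (hg (Real.cos θ)).comp θ (Real.hasDerivAt_cos θ)
    simpa [mul_comm, Function.comp_def] using this
  have hv : ∀ θ ∈ uIcc (0:ℝ) π, HasDerivAt (fun t => Real.sin ((m+1) * t) / (m+1))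
      (Real.cos ((m+1) * θ)) θ := fun θ _ => aux_sinmul m θ
  have hu' : IntervalIntegrable (fun θ => -Real.sin θ * g' (Real.cos θ)) volume 0 π :=
    (((Real.continuous_sin.neg).mul (hg'.comp Real.continuous_cos))).intervalIntegrable _ _
  have hv' : IntervalIntegrable (fun θ => Real.cos ((m+1) * θ)) volume 0 π :=
    (Real.continuous_cos.comp (continuous_const.mul continuous_id)).intervalIntegrable _ _
  have key := intervalIntegral.integral_mul_deriv_eq_deriv_mul hu hv hu' hv'
  have hb : Real.sin (((m:ℝ)+1) * π) = 0 := by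
    have : ((m:ℝ)+1) * π = ((m+1 : ℕ) : ℝ) * π := by push_cast; ring
    rw [this, Real.sin_nat_mul_pi]
  simp only [mul_zero, Real.sin_zero, hb, zero_div, mul_zero, zero_mul, sub_zero, zero_sub] at key
  have : (∫ θ in (0:ℝ)..π, Real.cos ((m+1) * θ) * g (Real.cos θ))
      = ∫ θ in (0:ℝ)..π, g (Real.cos θ) * Real.cos ((m+1) * θ) := by
    congr 1; ext θ; ring
  rw [this, key, ← intervalIntegral.integral_const_mul]
  rw [← intervalIntegral.integral_neg]
  congr 1; ext θ
  field_simp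

lemma aux_ptws (m : ℕ) (θ : ℝ) :
    Real.sin θ * Real.sin ((m+1) * θ)
      = (Real.cos (m * θ) - Real.cos ((m+2) * θ)) / 2 := by
  have h1 : (m:ℝ) * θ = ((m:ℝ)+1) * θ - θ := by ring
  have h2 : ((m:ℝ)+2) * θ = ((m:ℝ)+1) * θ + θ := by ring
  rw [h1, h2, Real.cos_sub, Real.cos_add]
  ring

lemma aux_rec (h : ℝ → ℝ) (hh : Continuous h) (m : ℕ) :
    (∫ θ in (0:ℝ)..π, Real.sin θ * h (Real.cos θ) * Real.sin ((m+1) * θ))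
      = (1/2) * ((∫ θ in (0:ℝ)..π, Real.cos (m * θ) * h (Real.cos θ))
          - ∫ θ in (0:ℝ)..π, Real.cos ((m+2) * θ) * h (Real.cos θ)) := by
  have i1 : IntervalIntegrable (fun θ => Real.cos ((m:ℝ) * θ) * h (Real.cos θ)) volume 0 π :=
    ((Real.continuous_cos.comp (continuous_const.mul continuous_id)).mul
      (hh.comp Real.continuous_cos)).intervalIntegrable _ _
  have i2 : IntervalIntegrable (fun θ => Real.cos (((m:ℝ)+2) * θ) * h (Real.cos θ)) volume 0 π :=
    ((Real.continuous_cos.comp (continuous_const.mul continuous_id)).mul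
      (hh.comp Real.continuous_cos)).intervalIntegrable _ _
  rw [← intervalIntegral.integral_sub i1 i2, ← intervalIntegral.integral_const_mul]
  congr 1; ext θ
  have := aux_ptws m θ
  calc Real.sin θ * h (Real.cos θ) * Real.sin ((m+1) * θ)
      = (Real.sin θ * Real.sin ((m+1) * θ)) * h (Real.cos θ) := by ring
    _ = ((Real.cos (m * θ) - Real.cos ((m+2) * θ)) / 2) * h (Real.cos θ) := by rw [this]
    _ = 1/2 * (Real.cos (m * θ) * h (Real.cos θ) - Real.cos ((m+2) * θ) * h (Real.cos θ)) := by ring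

lemma aux_sinsq (c : ℕ) : (∫ θ in (0:ℝ)..π, Real.sin (((c:ℝ)+1) * θ) ^ 2) = π / 2 := by
  have hc : ((c:ℝ)+1) ≠ 0 := by positivity
  have := intervalIntegral.integral_comp_mul_left (a := (0:ℝ)) (b := π)
    (fun x => Real.sin x ^ 2) hc
  rw [this]
  rw [integral_sin_sq]
  have h1 : Real.sin (((c:ℝ)+1) * π) = 0 := by
    have : ((c:ℝ)+1) * π = ((c+1 : ℕ) : ℝ) * π := by push_cast; ring
    rw [this, Real.sin_nat_mul_pi]
  simp [h1]
  field_simp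

lemma aux_base (h : ℝ → ℝ) (hh : Continuous h) (M : ℝ)
    (hM : ∀ x ∈ Icc (-1:ℝ) 1, |h x| ≤ M) (m : ℕ) :
    |∫ θ in (0:ℝ)..π, Real.sin θ * h (Real.cos θ) * Real.sin ((m+1) * θ)| ≤ π / 2 * M := by
  have hM0 : 0 ≤ M := le_trans (abs_nonneg _) (hM 0 (by norm_num))
  have habs := intervalIntegral.abs_integral_le_integral_abs (a := (0:ℝ)) (b := π)
    (μ := volume) (f := fun θ => Real.sin θ * h (Real.cos θ) * Real.sin ((m+1) * θ)) Real.pi_pos.le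
  refine habs.trans ?_
  have hcont : Continuous fun θ => |Real.sin θ * h (Real.cos θ) * Real.sin (((m:ℝ)+1) * θ)| := by
    fun_prop
  have hcont2 : Continuous fun θ : ℝ =>
      M * ((Real.sin θ ^ 2 + Real.sin (((m:ℝ)+1) * θ) ^ 2) / 2) := by fun_prop
  have hmono : (∫ θ in (0:ℝ)..π, |Real.sin θ * h (Real.cos θ) * Real.sin ((m+1) * θ)|)
      ≤ ∫ θ in (0:ℝ)..π, M * ((Real.sin θ ^ 2 + Real.sin (((m:ℝ)+1) * θ) ^ 2) / 2) := by
    apply intervalIntegral.integral_mono_on Real.pi_pos.le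
      (hcont.intervalIntegrable _ _) (hcont2.intervalIntegrable _ _)
    intro θ hθ
    have h1 : |h (Real.cos θ)| ≤ M := hM _ (Real.cos_mem_Icc θ)
    have h2 : |Real.sin θ| * |Real.sin (((m:ℝ)+1) * θ)|
        ≤ (Real.sin θ ^ 2 + Real.sin (((m:ℝ)+1) * θ) ^ 2) / 2 := by
      nlinarith [sq_nonneg (|Real.sin θ| - |Real.sin (((m:ℝ)+1) * θ)|), sq_abs (Real.sin θ),
        sq_abs (Real.sin (((m:ℝ)+1) * θ))]
    calc |Real.sin θ * h (Real.cos θ) * Real.sin ((m+1) * θ)|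
        = |Real.sin θ| * |Real.sin (((m:ℝ)+1) * θ)| * |h (Real.cos θ)| := by
          rw [abs_mul, abs_mul]; ring
      _ ≤ ((Real.sin θ ^ 2 + Real.sin (((m:ℝ)+1) * θ) ^ 2) / 2) * M := by
          apply mul_le_mul h2 h1 (abs_nonneg _)
          positivity
      _ = M * ((Real.sin θ ^ 2 + Real.sin (((m:ℝ)+1) * θ) ^ 2) / 2) := by ring
  refine hmono.trans ?_
  rw [intervalIntegral.integral_const_mul]
  have hsplit : (∫ θ in (0:ℝ)..π, (Real.sin θ ^ 2 + Real.sin (((m:ℝ)+1) * θ) ^ 2) / 2)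
      = π / 2 := by
    have i1 : IntervalIntegrable (fun θ => Real.sin θ ^ 2) volume 0 π := by
      apply Continuous.intervalIntegrable; fun_prop
    have i2 : IntervalIntegrable (fun θ => Real.sin (((m:ℝ)+1) * θ) ^ 2) volume 0 π := by
      apply Continuous.intervalIntegrable; fun_prop
    have : (∫ θ in (0:ℝ)..π, (Real.sin θ ^ 2 + Real.sin (((m:ℝ)+1) * θ) ^ 2) / 2)
        = (1/2) * ∫ θ in (0:ℝ)..π, (Real.sin θ ^ 2 + Real.sin (((m:ℝ)+1) * θ) ^ 2) := by
      rw [← intervalIntegral.integral_const_mul]; congr 1; ext θ; ring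
    rw [this, intervalIntegral.integral_add i1 i2]
    have e1 : (∫ θ in (0:ℝ)..π, Real.sin θ ^ 2) = π / 2 := by
      have := aux_sinsq 0
      simpa using this
    rw [e1, aux_sinsq m]
    ring
  rw [hsplit]
  ring_nf
  rw [mul_comm]

theorem stmt_0 (f : ℝ → ℝ) (hf : ContDiff ℝ (⊤ : ℕ∞) f) (k : ℕ) (hk : 1 ≤ k)
    (a : ℕ → ℝ)
    (ha : ∀ n : ℕ, a n =
      (2 / Real.pi) * ∫ x in (-1:ℝ)..1,
        Real.cos (n * Real.arccos x) * f x / Real.sqrt (1 - x ^ 2)) :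
    ∀ n : ℕ, k + 1 ≤ n →
      |a n| ≤ sSup ((fun x => |iteratedDeriv (k+1) f x|) '' Set.Icc (-1:ℝ) 1) /
          ∏ j ∈ Finset.range (k+1), ((n : ℝ) - j) ∧
      |a n| ≤ sSup ((fun x => |iteratedDeriv (k+1) f x|) '' Set.Icc (-1:ℝ) 1) := by
  set M := sSup ((fun x => |iteratedDeriv (k+1) f x|) '' Set.Icc (-1:ℝ) 1) with hMdef
  have hcont : ∀ j, Continuous (iteratedDeriv j f) := fun j =>
    hf.continuous_iteratedDeriv j (by exact_mod_cast le_top)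
  have hbdd : BddAbove ((fun x => |iteratedDeriv (k+1) f x|) '' Set.Icc (-1:ℝ) 1) :=
    (isCompact_Icc.image (hcont (k+1)).abs).bddAbove
  have hMb : ∀ x ∈ Icc (-1:ℝ) 1, |iteratedDeriv (k+1) f x| ≤ M :=
    fun x hx => le_csSup hbdd ⟨x, hx, rfl⟩
  have hM0 : 0 ≤ M := le_trans (abs_nonneg _) (hMb 0 (by norm_num))
  have hderiv : ∀ j x, HasDerivAt (iteratedDeriv j f) (iteratedDeriv (j+1) f x) x := by
    intro j x
    have hd : DifferentiableAt ℝ (iteratedDeriv j f) x :=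
      (hf.differentiable_iteratedDeriv j (by exact_mod_cast ENat.coe_lt_top j)) x
    have := hd.hasDerivAt
    rwa [show deriv (iteratedDeriv j f) x = iteratedDeriv (j+1) f x by
      rw [iteratedDeriv_succ]] at this
  set A : ℕ → ℕ → ℝ :=
    fun j m => ∫ θ in (0:ℝ)..π, Real.cos (m * θ) * iteratedDeriv j f (Real.cos θ) with hA
  have hrec : ∀ j m : ℕ,
      A j (m+1) = (1/(2*((m:ℝ)+1))) * (A (j+1) m - A (j+1) (m+2)) := by
    intro j m
    have h1 := aux_ibp (iteratedDeriv j f) (iteratedDeriv (j+1) f) (hderiv j) (hcont (j+1)) m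
    have h2 := aux_rec (iteratedDeriv (j+1) f) (hcont (j+1)) m
    simp only [hA]
    push_cast
    rw [h1, h2, ← mul_assoc]
    congr 1
    rw [div_mul_div_comm, one_mul, mul_comm]
  have hbase : ∀ m : ℕ, |A k (m+1)| ≤ (π/2) * M / ((m:ℝ)+1) := by
    intro m
    have h1 := aux_ibp (iteratedDeriv k f) (iteratedDeriv (k+1) f) (hderiv k) (hcont (k+1)) m
    have h2 := aux_base (iteratedDeriv (k+1) f) (hcont (k+1)) M hMb m
    have e : A k (m+1) = (1/((m:ℝ)+1)) *
        ∫ θ in (0:ℝ)..π, Real.sin θ * iteratedDeriv (k+1) f (Real.cos θ)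
          * Real.sin ((m+1) * θ) := by
      simp only [hA]; push_cast; rw [h1]
    rw [e, abs_mul]
    have hm1 : (0:ℝ) < (m:ℝ)+1 := by positivity
    rw [abs_of_pos (by positivity : (0:ℝ) < 1/((m:ℝ)+1))]
    rw [div_eq_mul_one_div ((π/2)*M) ((m:ℝ)+1), mul_comm ((π/2)*M) _]
    exact mul_le_mul_of_nonneg_left h2 (by positivity)
  -- main induction
  have main : ∀ d, d ≤ k → ∀ m : ℕ,
      |A (k-d) (m+d+1)| ≤ (π/2) * M / ∏ i ∈ Finset.range (d+1), ((m:ℝ)+d+1 - i) := by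
    intro d
    induction d with
    | zero =>
      intro _ m
      simpa [Finset.prod_range_one] using hbase m
    | succ d ih =>
      intro hdk m
      have ih' := ih (by omega)
      have hrw : k - (d+1) + 1 = k - d := by omega
      have e1 : m + (d+1) + 1 = (m + d + 1) + 1 := by omega
      have e2 : A (k-(d+1)) ((m+d+1)+1)
          = (1/(2*(((m+d+1:ℕ):ℝ)+1))) * (A (k-d) (m+d+1) - A (k-d) (m+d+3)) := by
        have h := hrec (k-(d+1)) (m+d+1)
        rw [hrw, show m+d+1+2 = m+d+3 from by omega] at h
        exact h
      have ihm := ih' m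
      have ihm2 := ih' (m+2)
      have e3 : m + 2 + d + 1 = m + d + 3 := by omega
      rw [e3] at ihm2
      push_cast at ihm2
      set P1 : ℝ := ∏ i ∈ Finset.range (d+1), ((m:ℝ)+d+1 - i) with hP1
      set P2 : ℝ := ∏ i ∈ Finset.range (d+1), ((m:ℝ)+2+d+1 - i) with hP2
      have hP1pos : 0 < P1 := by
        apply Finset.prod_pos
        intro i hi
        have hi' : (i:ℝ) ≤ d := by
          exact_mod_cast Nat.lt_succ_iff.mp (Finset.mem_range.mp hi)
        linarith
      have hP12 : P1 ≤ P2 := by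
        apply Finset.prod_le_prod
        · intro i hi
          have hi' : (i:ℝ) ≤ d := by
            exact_mod_cast Nat.lt_succ_iff.mp (Finset.mem_range.mp hi)
          linarith
        · intro i hi; linarith
      have hP2pos : 0 < P2 := lt_of_lt_of_le hP1pos hP12
      have hb2 : |A (k-d) (m+d+3)| ≤ (π/2) * M / P1 := by
        refine ihm2.trans ?_
        apply div_le_div_of_nonneg_left (by positivity) hP1pos hP12
      have hsum : |A (k-d) (m+d+1) - A (k-d) (m+d+3)|
          ≤ 2 * ((π/2) * M / P1) := by
        calc |A (k-d) (m+d+1) - A (k-d) (m+d+3)|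
            ≤ |A (k-d) (m+d+1)| + |A (k-d) (m+d+3)| := by
              rw [sub_eq_add_neg]
              exact (abs_add_le _ _).trans (by rw [abs_neg])
          _ ≤ (π/2) * M / P1 + (π/2) * M / P1 := add_le_add ihm hb2
          _ = 2 * ((π/2) * M / P1) := by ring
      rw [e1, e2, abs_mul]
      rw [abs_of_pos (by positivity : (0:ℝ) < 1/(2*(((m+d+1:ℕ):ℝ)+1)))]
      have step : 1/(2*(((m+d+1:ℕ):ℝ)+1)) * |A (k-d) (m+d+1) - A (k-d) (m+d+3)|
          ≤ 1/(2*(((m+d+1:ℕ):ℝ)+1)) * (2 * ((π/2) * M / P1)) :=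
        mul_le_mul_of_nonneg_left hsum (by positivity)
      have hprod : (∏ i ∈ Finset.range (d+1+1), ((m:ℝ)+((d+1:ℕ):ℝ)+1 - i))
          = P1 * ((m:ℝ)+(d:ℝ)+2) := by
        rw [Finset.prod_range_succ']
        have hcg : ∀ i ∈ Finset.range (d+1),
            ((m:ℝ)+((d+1:ℕ):ℝ)+1 - ((i+1 : ℕ):ℝ)) = ((m:ℝ)+d+1 - i) := by
          intro i _; push_cast; ring
        rw [Finset.prod_congr rfl hcg]
        push_cast
        ring
      rw [hprod]
      refine step.trans (le_of_eq ?_)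
      have hP1ne : P1 ≠ 0 := hP1pos.ne'
      push_cast
      field_simp
      ring
  -- conclude
  intro n hn
  obtain ⟨m, rfl⟩ : ∃ m, n = m + k + 1 := ⟨n - (k+1), by omega⟩
  have h0 := main k le_rfl m
  rw [Nat.sub_self] at h0
  have hae : a (m+k+1) = (2/π) * A 0 (m+k+1) := by
    rw [ha (m+k+1), aux_cov f (m+k+1)]
    simp only [hA, iteratedDeriv_zero]
  have hprodeq : (∏ j ∈ Finset.range (k+1), (((m+k+1 : ℕ):ℝ) - j))
      = ∏ i ∈ Finset.range (k+1), ((m:ℝ)+k+1 - i) := by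
    apply Finset.prod_congr rfl
    intro i _; push_cast; ring
  have hPpos : (0:ℝ) < ∏ i ∈ Finset.range (k+1), ((m:ℝ)+k+1 - i) := by
    apply Finset.prod_pos
    intro i hi
    have hi' : (i:ℝ) ≤ k := by
      exact_mod_cast Nat.lt_succ_iff.mp (Finset.mem_range.mp hi)
    linarith
  have hP1le : (1:ℝ) ≤ ∏ i ∈ Finset.range (k+1), ((m:ℝ)+k+1 - i) := by
    calc (1:ℝ) = ∏ i ∈ Finset.range (k+1), (1:ℝ) := by simp
      _ ≤ ∏ i ∈ Finset.range (k+1), ((m:ℝ)+k+1 - i) := by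
        apply Finset.prod_le_prod
        · intro i _; norm_num
        · intro i hi
          have hi' : (i:ℝ) ≤ k := by
            exact_mod_cast Nat.lt_succ_iff.mp (Finset.mem_range.mp hi)
          linarith
  have hbound : |a (m+k+1)| ≤ M / ∏ i ∈ Finset.range (k+1), ((m:ℝ)+k+1 - i) := by
    rw [hae, abs_mul, abs_of_pos (by positivity : (0:ℝ) < 2/π)]
    calc 2/π * |A 0 (m+k+1)|
        ≤ 2/π * ((π/2) * M / ∏ i ∈ Finset.range (k+1), ((m:ℝ)+k+1 - i)) :=
          mul_le_mul_of_nonneg_left h0 (by positivity)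
      _ = M / ∏ i ∈ Finset.range (k+1), ((m:ℝ)+k+1 - i) := by
          field_simp
  constructor
  · rw [hprodeq]
    exact hbound
  · refine hbound.trans ?_
    exact div_le_self hM0 hP1le
end

section
/- Let D > 0 and let f_n : [0,D] → [0,1] and g_n : [0,D] → ℝ be sequences of functions such that f_{n+1} = f_n², each g_{n+1} = S ∘ g_n for a function S : ℝ → ℝ satisfying |S(x) − S(y)| ≤ 2|x−y| for all x,y ∈ ℝ and sup_{t∈[0,1]} |S(t) − t²| ≤ ζ. If sup_{x∈[0,D]} |f_1(x) − g_1(x)| ≤ ζ and the values g_n(x) remain real, then for every n ≥ 1, sup_{x∈[0,D]} |f_n(x) − g_n(x)| ≤ 4^{n−1} ζ. -/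
theorem stmt_3 (D : ℝ) (hD : 0 < D) (ζ : ℝ) (hζ : ζ ∈ Set.Ioo (0:ℝ) (1/2))
    (f g : ℕ → ℝ → ℝ) (S : ℝ → ℝ)
    (hfmap : ∀ n : ℕ, ∀ x ∈ Set.Icc 0 D, f n x ∈ Set.Icc (0:ℝ) 1)
    (hfsq : ∀ n : ℕ, ∀ x : ℝ, f (n+1) x = (f n x)^2)
    (hgS : ∀ n : ℕ, ∀ x : ℝ, g (n+1) x = S (g n x))
    (hSlip : ∀ x y : ℝ, |S x - S y| ≤ 2 * |x - y|)
    (hSsq : ∀ t ∈ Set.Icc (0:ℝ) 1, |S t - t^2| ≤ ζ)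
    (h1 : ∀ x ∈ Set.Icc 0 D, |f 1 x - g 1 x| ≤ ζ) :
    ∀ n : ℕ, 1 ≤ n → ∀ x ∈ Set.Icc 0 D, |f n x - g n x| ≤ 4^(n-1) * ζ := by
  intro n hn
  induction n with
  | zero => omega
  | succ n ih =>
    rcases Nat.eq_zero_or_pos n with rfl | hn1
    · intro x hx
      simpa using h1 x hx
    · intro x hx
      have ihx := ih hn1 x hx
      have key : |f (n+1) x - g (n+1) x| ≤ ζ + 2 * (4^(n-1) * ζ) := by
        rw [hfsq, hgS]
        calc |(f n x)^2 - S (g n x)|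
            ≤ |(f n x)^2 - S (f n x)| + |S (f n x) - S (g n x)| := by
              have := abs_sub_abs_le_abs_sub ((f n x)^2 - S (f n x)) 0
              calc |(f n x)^2 - S (g n x)|
                  = |((f n x)^2 - S (f n x)) + (S (f n x) - S (g n x))| := by ring_nf
                _ ≤ _ := abs_add_le _ _
          _ ≤ ζ + 2 * (4^(n-1) * ζ) := by
              have h1' : |(f n x)^2 - S (f n x)| ≤ ζ := by
                rw [abs_sub_comm]; exact hSsq _ (hfmap n x hx)
              have h2' : |S (f n x) - S (g n x)| ≤ 2 * |f n x - g n x| :=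
                hSlip _ _
              linarith
      have : ζ + 2 * (4^(n-1) * ζ) ≤ 4^n * ζ := by
        have hz : 0 < ζ := hζ.1
        have h4 : (4:ℝ)^n = 4 * 4^(n-1) := by
          rw [← pow_succ']
          congr 1
          omega
        have hp : (1:ℝ) ≤ 4^(n-1) := one_le_pow₀ (by norm_num)
        rw [h4]
        nlinarith
      simpa using key.trans this
end

section
/- Let D > 1 and suppose Q : [1,D] → ℝ satisfies ‖1/x − Q(x)‖_{L^∞([1,D])} ≤ ζ with ζ ∈ (0,1). Define recursively R₁ = Q and R_{n+1}(x) = M(R_n(x), Q(x)), where M : ℝ² → ℝ satisfies |M(u,v) − uv| ≤ ζ on the relevant domain (containing all values R_n(x), Q(x) for x ∈ [1,D]). Then for every n ≥ 1, ‖x^{−n} − R_n‖_{L^∞([1,D])} ≤ (2n+1)(1+ζ)^n ζ. -/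
/-!
Write `1/x^(n+1) - R_{n+1} = (1/x^n · 1/x - R_n · Q) + (R_n · Q - M(R_n, Q))`. The second term is
at most `ζ`; the first is the error of a product of two approximations of numbers of modulus `≤ 1`,
hence at most `e + ζ + eζ` when `e` bounds the error of `R_n`. With `e = (2n+1)(1+ζ)^n ζ` the total
`e(1+ζ) + 2ζ` is at most `(2n+3)(1+ζ)^(n+1) ζ`.
-/

theorem abs_mul_sub_mul_le_of_abs_le_one {a b a' b' ε δ : ℝ} (ha : |a| ≤ 1) (hb : |b| ≤ 1)
    (hε : |a - a'| ≤ ε) (hδ : |b - b'| ≤ δ) : |a * b - a' * b'| ≤ ε + δ + ε * δ := by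
  have hε0 : 0 ≤ ε := (abs_nonneg _).trans hε
  calc |a * b - a' * b'| = |(a - a') * b + a * (b - b') - (a - a') * (b - b')| := by ring_nf
    _ ≤ |(a - a') * b| + |a * (b - b')| + |(a - a') * (b - b')| :=
      (abs_sub _ _).trans (add_le_add_left (abs_add_le _ _) _)
    _ ≤ ε * 1 + 1 * δ + ε * δ := by
      simp only [abs_mul]
      gcongr
    _ = ε + δ + ε * δ := by ring

theorem inv_pow_error_bound_succ {ζ : ℝ} (hζ : 0 ≤ ζ) (n : ℕ) :
    (2 * n + 1) * (1 + ζ) ^ n * ζ + ζ + (2 * n + 1) * (1 + ζ) ^ n * ζ * ζ + ζ ≤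
      (2 * ((n + 1 : ℕ) : ℝ) + 1) * (1 + ζ) ^ (n + 1) * ζ := by
  have hpow : 1 ≤ (1 + ζ) ^ (n + 1) := one_le_pow₀ (by linarith)
  have : 2 * ζ ≤ 2 * (1 + ζ) ^ (n + 1) * ζ := by nlinarith
  push_cast
  linear_combination this

theorem abs_one_div_pow_sub_le {x q ζ : ℝ} {r : ℕ → ℝ} (hx : 1 ≤ x) (hζ : 0 ≤ ζ)
    (hq : |1 / x - q| ≤ ζ) (hr₁ : r 1 = q) (hr : ∀ n, 1 ≤ n → |r (n + 1) - r n * q| ≤ ζ) :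
    ∀ n, 1 ≤ n → |1 / x ^ n - r n| ≤ (2 * (n : ℝ) + 1) * (1 + ζ) ^ n * ζ := by
  have hinv : ∀ m : ℕ, |1 / x ^ m| ≤ 1 := fun m => by
    rw [abs_of_pos (by positivity), div_le_one (by positivity)]
    exact one_le_pow₀ hx
  intro n hn
  induction n, hn using Nat.le_induction with
  | base =>
    rw [pow_one, hr₁]
    nlinarith
  | succ n hn ih =>
    have hprod := abs_mul_sub_mul_le_of_abs_le_one (hinv n) (by simpa using hinv 1) ih hq
    calc |1 / x ^ (n + 1) - r (n + 1)|
        ≤ |1 / x ^ n * (1 / x) - r n * q| + |r n * q - r (n + 1)| := by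
          rw [pow_succ, one_div_mul_one_div]
          exact abs_sub_le _ _ _
      _ ≤ _ := by
        rw [abs_sub_comm (r n * q)]
        linarith [hr n hn, inv_pow_error_bound_succ hζ n]

theorem stmt_10_general (D ζ : ℝ) (hζ : ζ ∈ Set.Ioo (0:ℝ) 1)
    (Q : ℝ → ℝ) (M : ℝ → ℝ → ℝ) (R : ℕ → ℝ → ℝ)
    (hQ : ∀ x ∈ Set.Icc 1 D, |1/x - Q x| ≤ ζ)
    (hR1 : ∀ x : ℝ, R 1 x = Q x)
    (hRS : ∀ n : ℕ, ∀ x : ℝ, R (n+1) x = M (R n x) (Q x))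
    (hM : ∀ n : ℕ, 1 ≤ n → ∀ x ∈ Set.Icc 1 D,
      |M (R n x) (Q x) - R n x * Q x| ≤ ζ) :
    ∀ n : ℕ, 1 ≤ n → ∀ x ∈ Set.Icc 1 D,
      |1/x^n - R n x| ≤ (2*(n:ℝ) + 1) * (1 + ζ)^n * ζ := by
  intro n hn x hx
  refine abs_one_div_pow_sub_le (r := (R · x)) hx.1 hζ.1.le (hQ x hx) (hR1 x) (fun m hm => ?_) n hn
  rw [hRS]
  exact hM m hm x hx

theorem stmt_10 (D ζ : ℝ) (hD : 1 < D) (hζ : ζ ∈ Set.Ioo (0:ℝ) 1)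
    (Q : ℝ → ℝ) (M : ℝ → ℝ → ℝ) (R : ℕ → ℝ → ℝ)
    (hQ : ∀ x ∈ Set.Icc 1 D, |1/x - Q x| ≤ ζ)
    (hR1 : ∀ x : ℝ, R 1 x = Q x)
    (hRS : ∀ n : ℕ, ∀ x : ℝ, R (n+1) x = M (R n x) (Q x))
    (hM : ∀ n : ℕ, 1 ≤ n → ∀ x ∈ Set.Icc 1 D,
      |M (R n x) (Q x) - R n x * Q x| ≤ ζ) :
    ∀ n : ℕ, 1 ≤ n → ∀ x ∈ Set.Icc 1 D,
      |1/x^n - R n x| ≤ (2*(n:ℝ) + 1) * (1 + ζ)^n * ζ :=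
  stmt_10_general D ζ hζ Q M R hQ hR1 hRS hM
end
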